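/- Let L_Lip ⊆ L* be the class of losses ℓ ∈ L* such that p ↦ ℓ(p, y) is 1-Lipschitz for each y ∈ {0,1}, and let Lip(2) be the class of 2-Lipschitz functions κ : [0,1] → [0,1]. Define CDL_{L_Lip, Lip(2)}(J) = sup over ℓ ∈ L_Lip and κ ∈ Lip(2) of E_{(p,y)~J}[ℓ(p,y) − ℓ(κ(p),y)], and define the smooth calibration error smCE(J) = sup over 1-Lipschitz w : [0,1] → [−1,1] of E_{(p,y)~J}[w(p)(y − p)]. Then for every probability distribution J on [0,1] × {0,1}: (1/2)·smCE(J)² ≤ CDL_{L_Lip, Lip(2)}(J) ≤ 6·smCE(J). -/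

import Mathlib

open MeasureTheory Set

noncomputable section

/-- Expected loss of prediction `p` when the outcome is `y ~ Bernoulli(q)`:
`ℓ(p,q) = q·ℓ(p,1) + (1−q)·ℓ(p,0)`. -/
def elos (ℓ : ℝ → ℝ → ℝ) (p q : ℝ) : ℝ := q * ℓ p 1 + (1 - q) * ℓ p 0

/-- A loss is proper if truthful prediction minimizes expected loss. -/
def IsProper (ℓ : ℝ → ℝ → ℝ) : Prop :=
  ∀ p ∈ Icc (0:ℝ) 1, ∀ q ∈ Icc (0:ℝ) 1, elos ℓ q q ≤ elos ℓ p q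

/-- The class `L*` of proper losses with `|ℓ(p,1) − ℓ(p,0)| ≤ 1`. -/
def Lstar (ℓ : ℝ → ℝ → ℝ) : Prop :=
  IsProper ℓ ∧ ∀ p ∈ Icc (0:ℝ) 1, |ℓ p 1 - ℓ p 0| ≤ 1

/-- Projection onto `[0,1]`. -/
def proj01 (x : ℝ) : ℝ := max 0 (min 1 x)

/-- Calibration decision loss of `J` relative to the post-processing class `K`:
`sup` over `ℓ ∈ L*` and `κ ∈ K` of `E[ℓ(p,y) − ℓ(κ(p),y)]`. -/
def CDL (K : Set (ℝ → ℝ)) (J : Measure (ℝ × ℝ)) : ℝ :=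
  sSup { x | ∃ ℓ κ, Lstar ℓ ∧ κ ∈ K ∧
    x = ∫ z, (ℓ z.1 z.2 - ℓ (κ z.1) z.2) ∂J }

/-- `sign_s(t)`: `+1` if `t > 0`, `−1` if `t < 0`, and `s` if `t = 0`. -/
def signS (s t : ℝ) : ℝ := if 0 < t then 1 else if t < 0 then -1 else s

/-- `sign₊ = sign_{+1}`. -/
def signP (t : ℝ) : ℝ := signS 1 t

/-- The V-shaped loss `ℓ_{v,s}(p,y) = −sign_s(p−v)·(y−v)`. -/
def vloss (v s : ℝ) : ℝ → ℝ → ℝ := fun p y => -(signS s (p - v)) * (y - v)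

/-- A valid post-processing class: maps `[0,1]` to `[0,1]`, contains the identity, and
is translation invariant. -/
def ValidClass (K : Set (ℝ → ℝ)) : Prop :=
  (∀ κ ∈ K, ∀ p ∈ Icc (0:ℝ) 1, κ p ∈ Icc (0:ℝ) 1) ∧
  ((fun p : ℝ => p) ∈ K) ∧
  (∀ s t : ℝ, ∀ κ ∈ K, (fun p : ℝ => proj01 (κ (proj01 (p + s)) + t)) ∈ K)

/-- Upper thresholds of a post-processing class. -/
def thr (K : Set (ℝ → ℝ)) : Set (ℝ → ℝ) :=
  { w | ∃ κ ∈ K, w = fun p => signP (κ p - 1/2) }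

/-- Modified thresholds: `thr(K)` together with all lower thresholds of the identity. -/
def thr' (K : Set (ℝ → ℝ)) : Set (ℝ → ℝ) :=
  thr K ∪ { w | ∃ v : ℝ, w = fun p => -signP (p - v) }

/-- Weight-restricted calibration error `CE_W(J) = sup_{w ∈ W} E[w(p)(y − p)]`. -/
def CE (W : Set (ℝ → ℝ)) (J : Measure (ℝ × ℝ)) : ℝ :=
  sSup { x | ∃ w ∈ W, x = ∫ z, w z.1 * (z.2 - z.1) ∂J }

/-- A probability distribution on `[0,1] × {0,1}`. -/
def IsPredDist (J : Measure (ℝ × ℝ)) : Prop :=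
  IsProbabilityMeasure J ∧ ∀ᵐ z ∂J, z.1 ∈ Icc (0:ℝ) 1 ∧ (z.2 = 0 ∨ z.2 = 1)

/-- The class `M₊` of nondecreasing post-processings `[0,1] → [0,1]`. -/
def Mplus : Set (ℝ → ℝ) :=
  { κ | (∀ p ∈ Icc (0:ℝ) 1, κ p ∈ Icc (0:ℝ) 1) ∧ MonotoneOn κ (Icc (0:ℝ) 1) }

/-- The class of losses in `L*` that are `1`-Lipschitz in the prediction. -/
def LLip : Set (ℝ → ℝ → ℝ) :=
  { ℓ | Lstar ℓ ∧ ∀ y ∈ ({0, 1} : Set ℝ), LipschitzOnWith 1 (fun p => ℓ p y) (Icc (0:ℝ) 1) }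

/-- The class of `2`-Lipschitz post-processings `[0,1] → [0,1]`. -/
def Lip2 : Set (ℝ → ℝ) :=
  { κ | (∀ p ∈ Icc (0:ℝ) 1, κ p ∈ Icc (0:ℝ) 1) ∧ LipschitzOnWith 2 κ (Icc (0:ℝ) 1) }

/-- `CDL` restricted to Lipschitz losses and `2`-Lipschitz post-processings. -/
def CDLLip (J : Measure (ℝ × ℝ)) : ℝ :=
  sSup { x | ∃ ℓ ∈ LLip, ∃ κ ∈ Lip2, x = ∫ z, (ℓ z.1 z.2 - ℓ (κ z.1) z.2) ∂J }

/-- The smooth calibration error. -/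
def smCE (J : Measure (ℝ × ℝ)) : ℝ :=
  sSup { x | ∃ w : ℝ → ℝ, (∀ p ∈ Icc (0:ℝ) 1, w p ∈ Icc (-1:ℝ) 1) ∧
    LipschitzOnWith 1 w (Icc (0:ℝ) 1) ∧ x = ∫ z, w z.1 * (z.2 - z.1) ∂J }

-- auxiliary lemmas
lemma proj01_mem (x : ℝ) : proj01 x ∈ Icc (0:ℝ) 1 :=
  ⟨le_max_left 0 _, max_le zero_le_one (min_le_left 1 x)⟩

lemma proj01_eq {x : ℝ} (h : x ∈ Icc (0:ℝ) 1) : proj01 x = x := by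
  unfold proj01; rw [min_eq_right h.2, max_eq_right h.1]

lemma proj01_lip : LipschitzWith 1 proj01 :=
  (LipschitzWith.const_min LipschitzWith.id 1).const_max 0

lemma proj01_dist {u y : ℝ} (hy : y ∈ Icc (0:ℝ) 1) : |proj01 u - y| ≤ |u - y| := by
  rcases le_total u 0 with h | h
  · have hp : proj01 u = 0 := by
      unfold proj01; rw [min_eq_right (h.trans zero_le_one), max_eq_left h]
    rw [hp, abs_of_nonpos (by linarith [hy.1]), abs_of_nonpos (by linarith [hy.1])]
    linarith
  · rcases le_total 1 u with h1 | h1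
    · have hp : proj01 u = 1 := by
        unfold proj01; rw [min_eq_left h1, max_eq_right zero_le_one]
      rw [hp, abs_of_nonneg (by linarith [hy.2]), abs_of_nonneg (by linarith [hy.2])]
      linarith
    · have hp : proj01 u = u := by
        unfold proj01; rw [min_eq_right h1, max_eq_right h]
      rw [hp]

lemma lip_ext {K : NNReal} {f : ℝ → ℝ} (h : LipschitzOnWith K f (Icc (0:ℝ) 1)) :
    LipschitzWith K (fun x => f (proj01 x)) := by
  have h2 : LipschitzOnWith (K * 1) (f ∘ proj01) univ :=
    h.comp (proj01_lip.lipschitzOnWith) (fun x _ => proj01_mem x)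
  rw [mul_one, lipschitzOnWith_univ] at h2
  exact h2

lemma lip_sub {f g : ℝ → ℝ} {Kf Kg : NNReal} (hf : LipschitzWith Kf f)
    (hg : LipschitzWith Kg g) : LipschitzWith (Kf + Kg) (fun x => f x - g x) := by
  apply LipschitzWith.of_dist_le_mul; intro x y
  have h1 := hf.dist_le_mul x y
  have h2 := hg.dist_le_mul x y
  simp only [Real.dist_eq] at *
  push_cast
  rw [show f x - g x - (f y - g y) = (f x - f y) - (g x - g y) by ring]
  exact (abs_sub _ _).trans (by linarith)

lemma lip_div6 {f : ℝ → ℝ} (hf : LipschitzWith 6 f) :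
    LipschitzWith 1 (fun x => f x / 6) := by
  apply LipschitzWith.of_dist_le_mul; intro x y
  have h1 := hf.dist_le_mul x y
  simp only [Real.dist_eq] at *
  push_cast at h1 ⊢
  rw [show f x / 6 - f y / 6 = (f x - f y) / 6 by ring, abs_div, abs_of_pos (by norm_num : (0:ℝ) < 6)]
  linarith

lemma int_le_const {J : Measure (ℝ × ℝ)} [IsProbabilityMeasure J] {f : ℝ × ℝ → ℝ} {C : ℝ}
    (hb : ∀ᵐ z ∂J, ‖f z‖ ≤ C) : ∫ z, f z ∂J ≤ C := by
  have h := norm_integral_le_of_norm_le_const hb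
  rw [probReal_univ] at h
  simp only [ENNReal.toReal_one, mul_one] at h
  exact (le_abs_self _).trans (by simpa [Real.norm_eq_abs] using h)

def sqloss : ℝ → ℝ → ℝ := fun p y => (p - y) ^ 2 / 2

lemma sqloss_mem : sqloss ∈ LLip := by
  refine ⟨⟨?_, ?_⟩, ?_⟩
  · intro p _ q _
    simp only [elos, sqloss]
    nlinarith [sq_nonneg (p - q)]
  · intro p hp
    simp only [sqloss]
    rw [abs_le]
    constructor <;> nlinarith [hp.1, hp.2]
  · intro y hy
    rw [lipschitzOnWith_iff_dist_le_mul]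
    intro p hp q hq
    simp only [Real.dist_eq, sqloss]
    rw [show (p - y) ^ 2 / 2 - (q - y) ^ 2 / 2 = (p - q) * ((p + q - 2 * y) / 2) by ring,
      abs_mul]
    have hy' : y = 0 ∨ y = 1 := by simpa using hy
    have h2 : |(p + q - 2 * y) / 2| ≤ 1 := by
      rw [abs_le]
      rcases hy' with h | h <;> subst h <;>
        constructor <;> nlinarith [hp.1, hp.2, hq.1, hq.2]
    push_cast
    nlinarith [abs_nonneg (p - q), abs_nonneg ((p + q - 2 * y) / 2)]

set_option maxHeartbeats 1000000

/-- `(1/2)·smCE(J)² ≤ CDL_{L_Lip, Lip(2)}(J) ≤ 6·smCE(J)`. -/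
theorem CDL_Lipschitz_vs_smCE (J : Measure (ℝ × ℝ)) (hJ : IsPredDist J) :
    (1/2) * smCE J ^ 2 ≤ CDLLip J ∧ CDLLip J ≤ 6 * smCE J := by
  obtain ⟨hprob, hae⟩ := hJ
  haveI := hprob
  set T : Set ℝ := { x | ∃ w : ℝ → ℝ, (∀ p ∈ Icc (0:ℝ) 1, w p ∈ Icc (-1:ℝ) 1) ∧
    LipschitzOnWith 1 w (Icc (0:ℝ) 1) ∧ x = ∫ z, w z.1 * (z.2 - z.1) ∂J } with hTdef
  set S : Set ℝ := { x | ∃ ℓ ∈ LLip, ∃ κ ∈ Lip2,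
    x = ∫ z, (ℓ z.1 z.2 - ℓ (κ z.1) z.2) ∂J } with hSdef
  have hsmT : smCE J = sSup T := rfl
  have hCS : CDLLip J = sSup S := rfl
  -- bounds on T
  have hT_le : ∀ x ∈ T, x ≤ 1 := by
    rintro x ⟨w, hw1, hw2, rfl⟩
    apply int_le_const
    filter_upwards [hae] with z hz
    obtain ⟨hp, hy⟩ := hz
    have h1 : |w z.1| ≤ 1 := abs_le.2 ⟨(hw1 z.1 hp).1, (hw1 z.1 hp).2⟩
    have h2 : |z.2 - z.1| ≤ 1 := by
      rcases hy with h | h <;> rw [h, abs_le] <;> constructor <;> linarith [hp.1, hp.2]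
    rw [Real.norm_eq_abs, abs_mul]
    nlinarith [abs_nonneg (w z.1), abs_nonneg (z.2 - z.1)]
  have hTbdd : BddAbove T := ⟨1, fun x hx => hT_le x hx⟩
  have hT0 : (0:ℝ) ∈ T := by
    refine ⟨fun _ => 0, fun p _ => by norm_num, ?_, by simp⟩
    rw [lipschitzOnWith_iff_dist_le_mul]
    intro p _ q _
    simp [dist_nonneg]
  have hsm0 : 0 ≤ smCE J := by rw [hsmT]; exact le_csSup hTbdd hT0
  -- bounds on S
  have hS_le1 : ∀ x ∈ S, x ≤ 1 := by
    rintro x ⟨ℓ, hℓ, κ, hκ, rfl⟩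
    apply int_le_const
    filter_upwards [hae] with z hz
    obtain ⟨hp, hy⟩ := hz
    have hκp := hκ.1 z.1 hp
    have hyM : z.2 ∈ ({0, 1} : Set ℝ) := by rcases hy with h | h <;> simp [h]
    have hd := (hℓ.2 z.2 hyM).dist_le_mul z.1 hp (κ z.1) hκp
    simp only [Real.dist_eq, NNReal.coe_one, one_mul] at hd
    have hd1 : |z.1 - κ z.1| ≤ 1 := by
      rw [abs_le]; constructor <;> linarith [hp.1, hp.2, hκp.1, hκp.2]
    rw [Real.norm_eq_abs]
    exact hd.trans hd1
  have hSbdd : BddAbove S := ⟨1, fun x hx => hS_le1 x hx⟩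
  have hS0 : (0:ℝ) ∈ S := by
    refine ⟨sqloss, sqloss_mem, fun p => p, ⟨fun p hp => hp, ?_⟩, by simp⟩
    have : LipschitzWith 2 (fun p : ℝ => p) := LipschitzWith.id.weaken one_le_two
    exact this.lipschitzOnWith
  have hCDL0 : 0 ≤ CDLLip J := by rw [hCS]; exact le_csSup hSbdd hS0
  -- UPPER BOUND: every element of S is ≤ 6 * smCE J
  have hS_le : ∀ x ∈ S, x ≤ 6 * smCE J := by
    rintro x ⟨ℓ, hℓ, κ, hκ, rfl⟩
    obtain ⟨⟨hprop, hbd⟩, hlip⟩ := hℓ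
    have hl0 : LipschitzOnWith 1 (fun p => ℓ p 0) (Icc (0:ℝ) 1) := hlip 0 (by simp)
    have hl1 : LipschitzOnWith 1 (fun p => ℓ p 1) (Icc (0:ℝ) 1) := hlip 1 (by simp)
    set A : ℝ → ℝ := fun p => ℓ (proj01 p) 0 with hA_def
    set B : ℝ → ℝ := fun p => ℓ (proj01 p) 1 - ℓ (proj01 p) 0 with hB_def
    set k : ℝ → ℝ := fun p => proj01 (κ (proj01 p)) with hk_def
    have hAlip : LipschitzWith 1 A := lip_ext hl0
    have hBlip : LipschitzWith 2 B := by
      have h := lip_sub (lip_ext hl1) (lip_ext hl0)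
      norm_num at h
      exact h
    have hklip : LipschitzWith 2 k := by
      have h1 : LipschitzWith 2 (fun p => κ (proj01 p)) := lip_ext hκ.2
      have h2 := proj01_lip.comp h1
      rw [one_mul] at h2
      exact h2
    have hDlip : LipschitzWith 6 (fun p => B p - B (k p)) := by
      have h := lip_sub hBlip (hBlip.comp hklip)
      norm_num at h
      exact h
    set W : ℝ → ℝ := fun p => (B p - B (k p)) / 6 with hW_def
    have hWlip : LipschitzWith 1 W := lip_div6 hDlip
    have hk_mem : ∀ p, k p ∈ Icc (0:ℝ) 1 := fun p => proj01_mem _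
    have hBbd : ∀ p, |B p| ≤ 1 := fun p => hbd (proj01 p) (proj01_mem p)
    have hDbd : ∀ p, |B p - B (k p)| ≤ 2 := fun p =>
      (abs_sub _ _).trans (by linarith [hBbd p, hBbd (k p)])
    have hWbd : ∀ p, |W p| ≤ 1 := by
      intro p
      rw [hW_def]
      simp only
      rw [abs_div, abs_of_pos (by norm_num : (0:ℝ) < 6)]
      linarith [hDbd p]
    have hW_mem : ∀ p, W p ∈ Icc (-1:ℝ) 1 := fun p => abs_le.1 (hWbd p)
    set G : ℝ → ℝ := fun p => (A p - A (k p)) + p * (B p - B (k p)) with hG_def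
    have hGcont : Continuous G := by
      exact (hAlip.continuous.sub (hAlip.continuous.comp hklip.continuous)).add
        (continuous_id.mul (hBlip.continuous.sub (hBlip.continuous.comp hklip.continuous)))
    have hWcont : Continuous W := hWlip.continuous
    -- integrability
    have hIG : Integrable (fun z : ℝ × ℝ => G z.1) J := by
      apply (integrable_const (3:ℝ)).mono' ((hGcont.comp continuous_fst).aestronglyMeasurable)
      filter_upwards [hae] with z hz
      obtain ⟨hp, _⟩ := hz
      show ‖G z.1‖ ≤ 3
      have h1 : |A z.1 - A (k z.1)| ≤ 1 := by
        have hd := hAlip.dist_le_mul z.1 (k z.1)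
        simp only [Real.dist_eq, NNReal.coe_one, one_mul] at hd
        have hd1 : |z.1 - k z.1| ≤ 1 := by
          rw [abs_le]
          constructor <;> linarith [hp.1, hp.2, (hk_mem z.1).1, (hk_mem z.1).2]
        linarith
      have h2 := hDbd z.1
      have h3 : |z.1| ≤ 1 := abs_le.2 ⟨by linarith [hp.1], hp.2⟩
      rw [Real.norm_eq_abs]
      have h4 := abs_add_le (A z.1 - A (k z.1)) (z.1 * (B z.1 - B (k z.1)))
      rw [abs_mul] at h4
      have : |G z.1| = |(A z.1 - A (k z.1)) + z.1 * (B z.1 - B (k z.1))| := rfl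
      rw [this]
      nlinarith [abs_nonneg z.1, abs_nonneg (B z.1 - B (k z.1))]
    have hIW : Integrable (fun z : ℝ × ℝ => W z.1 * (z.2 - z.1)) J := by
      apply (integrable_const (1:ℝ)).mono'
        (((hWcont.comp continuous_fst).mul (continuous_snd.sub continuous_fst)).aestronglyMeasurable)
      filter_upwards [hae] with z hz
      obtain ⟨hp, hy⟩ := hz
      show ‖W z.1 * (z.2 - z.1)‖ ≤ 1
      rw [Real.norm_eq_abs, abs_mul]
      have h1 := hWbd z.1
      have h2 : |z.2 - z.1| ≤ 1 := by
        rcases hy with h | h <;> rw [h, abs_le] <;> constructor <;> linarith [hp.1, hp.2]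
      nlinarith [abs_nonneg (W z.1), abs_nonneg (z.2 - z.1)]
    -- pointwise decomposition
    have hcong : ∀ᵐ z ∂J, ℓ z.1 z.2 - ℓ (κ z.1) z.2 = G z.1 + 6 * (W z.1 * (z.2 - z.1)) := by
      filter_upwards [hae] with z hz
      obtain ⟨hp, hy⟩ := hz
      have e1 : proj01 z.1 = z.1 := proj01_eq hp
      have e2 : k z.1 = κ z.1 := by rw [hk_def]; simp only; rw [e1, proj01_eq (hκ.1 z.1 hp)]
      have eA : A z.1 = ℓ z.1 0 := by rw [hA_def]; simp only; rw [e1]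
      have eAk : A (k z.1) = ℓ (κ z.1) 0 := by
        rw [hA_def]; simp only; rw [proj01_eq (hk_mem z.1), e2]
      have eB : B z.1 = ℓ z.1 1 - ℓ z.1 0 := by rw [hB_def]; simp only; rw [e1]
      have eBk : B (k z.1) = ℓ (κ z.1) 1 - ℓ (κ z.1) 0 := by
        rw [hB_def]; simp only; rw [proj01_eq (hk_mem z.1), e2]
      have eG : G z.1 = (A z.1 - A (k z.1)) + z.1 * (B z.1 - B (k z.1)) := rfl
      have eW : W z.1 = (B z.1 - B (k z.1)) / 6 := rfl
      rcases hy with h | h <;> rw [h, eG, eW, eA, eAk, eB, eBk] <;> ring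
    have hG_nonpos : ∀ᵐ z ∂J, G z.1 ≤ 0 := by
      filter_upwards [hae] with z hz
      obtain ⟨hp, _⟩ := hz
      have hκp := hκ.1 z.1 hp
      have hpr := hprop (κ z.1) hκp z.1 hp
      simp only [elos] at hpr
      have e1 : proj01 z.1 = z.1 := proj01_eq hp
      have e2 : k z.1 = κ z.1 := by rw [hk_def]; simp only; rw [e1, proj01_eq hκp]
      have eA : A z.1 = ℓ z.1 0 := by rw [hA_def]; simp only; rw [e1]
      have eAk : A (k z.1) = ℓ (κ z.1) 0 := by
        rw [hA_def]; simp only; rw [proj01_eq (hk_mem z.1), e2]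
      have eB : B z.1 = ℓ z.1 1 - ℓ z.1 0 := by rw [hB_def]; simp only; rw [e1]
      have eBk : B (k z.1) = ℓ (κ z.1) 1 - ℓ (κ z.1) 0 := by
        rw [hB_def]; simp only; rw [proj01_eq (hk_mem z.1), e2]
      have eG : G z.1 = (A z.1 - A (k z.1)) + z.1 * (B z.1 - B (k z.1)) := rfl
      rw [eG, eA, eAk, eB, eBk]
      nlinarith [hpr]
    have hs_mem : (∫ z, W z.1 * (z.2 - z.1) ∂J) ∈ T :=
      ⟨W, fun p _ => hW_mem p, hWlip.lipschitzOnWith, rfl⟩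
    have hs_le : (∫ z, W z.1 * (z.2 - z.1) ∂J) ≤ smCE J := by
      rw [hsmT]; exact le_csSup hTbdd hs_mem
    have hGle : (∫ z, G z.1 ∂J) ≤ 0 := integral_nonpos_of_ae hG_nonpos
    calc (∫ z, (ℓ z.1 z.2 - ℓ (κ z.1) z.2) ∂J)
        = ∫ z, (G z.1 + 6 * (W z.1 * (z.2 - z.1))) ∂J := integral_congr_ae hcong
      _ = (∫ z, G z.1 ∂J) + ∫ z, 6 * (W z.1 * (z.2 - z.1)) ∂J :=
          integral_add hIG (hIW.const_mul 6)
      _ = (∫ z, G z.1 ∂J) + 6 * ∫ z, W z.1 * (z.2 - z.1) ∂J := by rw [integral_const_mul]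
      _ ≤ 6 * smCE J := by linarith
  have hUB : CDLLip J ≤ 6 * smCE J := by
    rw [hCS]; exact Real.sSup_le hS_le (by linarith)
  -- LOWER BOUND
  have key : ∀ t ∈ T, t ≤ Real.sqrt (2 * CDLLip J) := by
    intro t ht
    rcases le_or_gt t 0 with h | h
    · exact h.trans (Real.sqrt_nonneg _)
    · obtain ⟨w, hw1, hw2, hteq⟩ := ht
      have ht1 : t ≤ 1 := hT_le t ⟨w, hw1, hw2, hteq⟩
      set w' : ℝ → ℝ := fun p => w (proj01 p) with hw'_def
      have hw'lip : LipschitzWith 1 w' := lip_ext hw2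
      have hw'bd : ∀ p, |w' p| ≤ 1 := fun p =>
        abs_le.2 ⟨(hw1 _ (proj01_mem p)).1, (hw1 _ (proj01_mem p)).2⟩
      set κ : ℝ → ℝ := fun p => proj01 (p + t * w' p) with hκ_def
      have hincont : Continuous (fun p : ℝ => p + t * w' p) :=
        continuous_id.add (continuous_const.mul hw'lip.continuous)
      have hκcont : Continuous κ := proj01_lip.continuous.comp hincont
      have hκlip : LipschitzOnWith 2 κ (Icc (0:ℝ) 1) := by
        have hin : LipschitzWith 2 (fun p : ℝ => p + t * w' p) := by
          apply LipschitzWith.of_dist_le_mul; intro a b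
          simp only [Real.dist_eq]
          have hd := hw'lip.dist_le_mul a b
          simp only [Real.dist_eq, NNReal.coe_one, one_mul] at hd
          push_cast
          rw [show a + t * w' a - (b + t * w' b) = (a - b) + t * (w' a - w' b) by ring]
          have h5 := abs_add_le (a - b) (t * (w' a - w' b))
          rw [abs_mul, abs_of_pos h] at h5
          nlinarith [abs_nonneg (w' a - w' b), abs_nonneg (a - b)]
        have h2 := proj01_lip.comp hin
        rw [one_mul] at h2
        exact h2.lipschitzOnWith
      have hκmem : ∀ p ∈ Icc (0:ℝ) 1, κ p ∈ Icc (0:ℝ) 1 := fun p _ => proj01_mem _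
      have hxS : (∫ z, (sqloss z.1 z.2 - sqloss (κ z.1) z.2) ∂J) ∈ S :=
        ⟨sqloss, sqloss_mem, κ, ⟨hκmem, hκlip⟩, rfl⟩
      have hpt : ∀ᵐ z ∂J, t * (w' z.1 * (z.2 - z.1)) - t ^ 2 / 2 ≤
          sqloss z.1 z.2 - sqloss (κ z.1) z.2 := by
        filter_upwards [hae] with z hz
        obtain ⟨hp, hy⟩ := hz
        have hyI : z.2 ∈ Icc (0:ℝ) 1 := by
          rcases hy with hh | hh <;> rw [hh] <;> constructor <;> norm_num
        have h1 : |proj01 (z.1 + t * w' z.1) - z.2| ≤ |z.1 + t * w' z.1 - z.2| :=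
          proj01_dist hyI
        have h1sq : (proj01 (z.1 + t * w' z.1) - z.2) ^ 2 ≤ (z.1 + t * w' z.1 - z.2) ^ 2 := by
          rw [← sq_abs, ← sq_abs (z.1 + t * w' z.1 - z.2)]
          exact pow_le_pow_left₀ (abs_nonneg _) h1 2
        have hw2' : (w' z.1) ^ 2 ≤ 1 := by
          rw [← sq_abs]; nlinarith [hw'bd z.1, abs_nonneg (w' z.1)]
        have eκ : κ z.1 = proj01 (z.1 + t * w' z.1) := rfl
        rw [eκ]
        simp only [sqloss]
        nlinarith [h1sq, mul_nonneg (sq_nonneg t) (sub_nonneg.2 hw2')]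
      have hIw' : Integrable (fun z : ℝ × ℝ => w' z.1 * (z.2 - z.1)) J := by
        apply (integrable_const (1:ℝ)).mono'
          (((hw'lip.continuous.comp continuous_fst).mul
            (continuous_snd.sub continuous_fst)).aestronglyMeasurable)
        filter_upwards [hae] with z hz
        obtain ⟨hp, hy⟩ := hz
        show ‖w' z.1 * (z.2 - z.1)‖ ≤ 1
        rw [Real.norm_eq_abs, abs_mul]
        have h2 : |z.2 - z.1| ≤ 1 := by
          rcases hy with hh | hh <;> rw [hh, abs_le] <;> constructor <;> linarith [hp.1, hp.2]
        nlinarith [hw'bd z.1, abs_nonneg (w' z.1), abs_nonneg (z.2 - z.1)]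
      have hIlhs : Integrable (fun z : ℝ × ℝ => t * (w' z.1 * (z.2 - z.1)) - t ^ 2 / 2) J :=
        (hIw'.const_mul t).sub (integrable_const _)
      have hIrhs : Integrable (fun z : ℝ × ℝ => sqloss z.1 z.2 - sqloss (κ z.1) z.2) J := by
        have hc : Continuous (fun z : ℝ × ℝ => sqloss z.1 z.2 - sqloss (κ z.1) z.2) := by
          apply Continuous.sub
          · exact (((continuous_fst.sub continuous_snd).pow 2).div_const 2)
          · exact ((((hκcont.comp continuous_fst).sub continuous_snd).pow 2).div_const 2)
        apply (integrable_const (1:ℝ)).mono' hc.aestronglyMeasurable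
        filter_upwards [hae] with z hz
        obtain ⟨hp, hy⟩ := hz
        have hκp : κ z.1 ∈ Icc (0:ℝ) 1 := proj01_mem _
        have hyI : z.2 ∈ Icc (0:ℝ) 1 := by
          rcases hy with hh | hh <;> rw [hh] <;> constructor <;> norm_num
        rw [Real.norm_eq_abs]
        simp only [sqloss]
        rw [abs_le]
        constructor <;> nlinarith [hp.1, hp.2, hyI.1, hyI.2, hκp.1, hκp.2,
          sq_nonneg (z.1 - z.2), sq_nonneg (κ z.1 - z.2)]
      have hint : (∫ z, (t * (w' z.1 * (z.2 - z.1)) - t ^ 2 / 2) ∂J) = t * t - t ^ 2 / 2 := by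
        rw [integral_sub (hIw'.const_mul t) (integrable_const _), integral_const_mul,
          integral_const, probReal_univ]
        have hww : (∫ z, w' z.1 * (z.2 - z.1) ∂J) = t := by
          rw [hteq]
          apply integral_congr_ae
          filter_upwards [hae] with z hz
          obtain ⟨hp, _⟩ := hz
          rw [hw'_def]
          simp only
          rw [proj01_eq hp]
        rw [hww]
        simp
      have hx_ge : t ^ 2 / 2 ≤ ∫ z, (sqloss z.1 z.2 - sqloss (κ z.1) z.2) ∂J := by
        have hmono := integral_mono_ae hIlhs hIrhs hpt
        rw [hint] at hmono
        have e : t * t - t ^ 2 / 2 = t ^ 2 / 2 := by ring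
        linarith
      have hxle : (∫ z, (sqloss z.1 z.2 - sqloss (κ z.1) z.2) ∂J) ≤ CDLLip J := by
        rw [hCS]; exact le_csSup hSbdd hxS
      have h2c : t ^ 2 ≤ 2 * CDLLip J := by linarith
      calc t = Real.sqrt (t ^ 2) := (Real.sqrt_sq h.le).symm
        _ ≤ Real.sqrt (2 * CDLLip J) := Real.sqrt_le_sqrt h2c
  have hsm_le : smCE J ≤ Real.sqrt (2 * CDLLip J) := by
    rw [hsmT]; exact Real.sSup_le key (Real.sqrt_nonneg _)
  have hsq : smCE J ^ 2 ≤ 2 * CDLLip J := by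
    have h2 : smCE J ^ 2 ≤ Real.sqrt (2 * CDLLip J) ^ 2 := pow_le_pow_left₀ hsm0 hsm_le 2
    rwa [Real.sq_sqrt (by linarith)] at h2
  exact ⟨by linarith, hUB⟩
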